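/- Let D ⊂ x·O_K[[x]] be a full family of commuting power series over the valuation ring O_K of a finite extension K/ℚ_p: the multiplier map ∂₀ : D → O_K, u ↦ u'(0), is surjective, and the common height of the noninvertible members of D equals [K : ℚ_p]. Assume the theorem that any stable noninvertible g with ∂₀(Stab(g)) = O_K^* and v_K(g'(0)) = 1 and height [K:ℚ_p] is an endomorphism of a Lubin–Tate formal group F over O_K with Stab(g) = Aut_{O_K}(F). Then D = End_{O_K}(F) for some Lubin–Tate formal group F over O_K. -/

import Mathlib

open IsLocalRing PowerSeries

/-- Composition `f ∘ g` of formal power series (substitution of `g`, with zero constant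
term, into `f`): `(psComp f g)(x) = f(g(x))`. -/
noncomputable def psComp {R : Type*} [CommRing R] (f g : PowerSeries R) : PowerSeries R :=
  PowerSeries.mk fun n =>
    ∑ k ∈ Finset.range (n + 1), PowerSeries.coeff k f * PowerSeries.coeff n (g ^ k)

/-- Substitution of a pair of multivariate power series (with zero constant terms) into a
two-variable power series `F`: `(mvEval2 F a b) = F(a, b)`. -/
noncomputable def mvEval2 {R : Type*} [CommRing R] {σ : Type*}
    (F : MvPowerSeries (Fin 2) R) (a b : MvPowerSeries σ R) : MvPowerSeries σ R :=
  fun s =>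
    ∑ ij ∈ Finset.range ((s.sum fun _ k => k) + 1) ×ˢ Finset.range ((s.sum fun _ k => k) + 1),
      MvPowerSeries.coeff (Finsupp.single 0 ij.1 + Finsupp.single 1 ij.2) F *
        MvPowerSeries.coeff s (a ^ ij.1 * b ^ ij.2)

/-- Substitution of a multivariate power series `G` (with zero constant term) into a
one-variable power series `f`: `(psEval f G) = f(G)`. -/
noncomputable def psEval {R : Type*} [CommRing R] {σ : Type*}
    (f : PowerSeries R) (G : MvPowerSeries σ R) : MvPowerSeries σ R :=
  fun s =>
    ∑ k ∈ Finset.range ((s.sum fun _ k => k) + 1),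
      PowerSeries.coeff k f * MvPowerSeries.coeff s (G ^ k)

/-- `F` is a (commutative) formal group law over `R`. -/
def IsFGL {R : Type*} [CommRing R] (F : MvPowerSeries (Fin 2) R) : Prop :=
  (mvEval2 F (PowerSeries.X : PowerSeries R) 0 = PowerSeries.X) ∧
  (mvEval2 F (0 : PowerSeries R) PowerSeries.X = PowerSeries.X) ∧
  (∀ i j : ℕ, MvPowerSeries.coeff (Finsupp.single 0 i + Finsupp.single 1 j) F =
      MvPowerSeries.coeff (Finsupp.single 0 j + Finsupp.single 1 i) F) ∧
  (mvEval2 F (mvEval2 F (MvPowerSeries.X 0) (MvPowerSeries.X 1))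
      (MvPowerSeries.X 2 : MvPowerSeries (Fin 3) R) =
    mvEval2 F (MvPowerSeries.X 0) (mvEval2 F (MvPowerSeries.X 1) (MvPowerSeries.X 2)))

/-- `f` is an endomorphism of the formal group law `F`: `f(F(x,y)) = F(f(x), f(y))`. -/
def IsEndo {R : Type*} [CommRing R] (F : MvPowerSeries (Fin 2) R) (f : PowerSeries R) :
    Prop :=
  PowerSeries.coeff 0 f = 0 ∧
    psEval f F =
      mvEval2 F (psEval f (MvPowerSeries.X 0 : MvPowerSeries (Fin 2) R))
        (psEval f (MvPowerSeries.X 1 : MvPowerSeries (Fin 2) R))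

/-- `F` is a Lubin–Tate formal group law over `R`: a formal group law for which the
multiplier map `∂₀ : End(F) → R` is bijective, i.e. every `a : R` arises as the linear
coefficient of a unique endomorphism `[a]_F`. -/
def IsLubinTateFGL {R : Type*} [CommRing R] (F : MvPowerSeries (Fin 2) R) : Prop :=
  IsFGL F ∧ ∀ a : R, ∃! f : PowerSeries R, IsEndo F f ∧ PowerSeries.coeff 1 f = a

/-- The Weierstrass degree of a power series over a local ring: the least `n` such that
the `n`-th coefficient is a unit. -/
noncomputable def wideg {R : Type*} [CommRing R] (g : PowerSeries R) : ℕ :=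
  sInf {n : ℕ | IsUnit (PowerSeries.coeff n g)}

namespace Aux18

/-- weight of a monomial exponent -/
def degw {σ : Type*} (s : σ →₀ ℕ) : ℕ := s.sum fun _ k => k

lemma degw_add {σ : Type*} (u v : σ →₀ ℕ) : degw (u + v) = degw u + degw v :=
  Finsupp.sum_add_index' (fun _ => rfl) (fun _ _ _ => rfl)

lemma degw_zero {σ : Type*} : degw (0 : σ →₀ ℕ) = 0 := Finsupp.sum_zero_index

lemma eq_zero_of_degw_eq_zero {σ : Type*} {u : σ →₀ ℕ} (h : degw u = 0) : u = 0 := by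
  ext a
  by_cases ha : a ∈ u.support
  · exact Finset.sum_eq_zero_iff.mp h a ha
  · simpa using Finsupp.notMem_support_iff.mp ha

variable {R : Type*} [CommRing R] {σ : Type*}

lemma coeff_pow_eq_zero {G : MvPowerSeries σ R} (hG : MvPowerSeries.constantCoeff G = 0)
    {k : ℕ} {s : σ →₀ ℕ} (h : degw s < k) : MvPowerSeries.coeff s (G ^ k) = 0 := by
  classical
  induction k generalizing s with
  | zero => omega
  | succ k ih =>
    rw [pow_succ, MvPowerSeries.coeff_mul]
    apply Finset.sum_eq_zero
    rintro ⟨u, w⟩ hmem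
    rw [Finset.HasAntidiagonal.mem_antidiagonal] at hmem
    by_cases hw : w = 0
    · subst hw
      simp only [MvPowerSeries.coeff_zero_eq_constantCoeff, hG, mul_zero]
    · have h1 : 1 ≤ degw w := by
        rcases Nat.eq_zero_or_pos (degw w) with h0 | h0
        · exact absurd (eq_zero_of_degw_eq_zero h0) hw
        · exact h0
      have : degw u < k := by
        have := degw_add u w
        rw [hmem] at this
        omega
      rw [ih this, zero_mul]

lemma coeff_mul_pow_eq_zero {A B : MvPowerSeries σ R}
    (hA : MvPowerSeries.constantCoeff A = 0) (hB : MvPowerSeries.constantCoeff B = 0)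
    {i j : ℕ} {s : σ →₀ ℕ} (h : degw s < i + j) :
    MvPowerSeries.coeff s (A ^ i * B ^ j) = 0 := by
  classical
  rw [MvPowerSeries.coeff_mul]
  apply Finset.sum_eq_zero
  rintro ⟨u, w⟩ hmem
  rw [Finset.HasAntidiagonal.mem_antidiagonal] at hmem
  have hd : degw u + degw w = degw s := by rw [← degw_add, hmem]
  by_cases hu : degw u < i
  · rw [coeff_pow_eq_zero hA hu, zero_mul]
  · have : degw w < j := by omega
    rw [coeff_pow_eq_zero hB this, mul_zero]

lemma coeff_psEval (f : PowerSeries R) (G : MvPowerSeries σ R) (s : σ →₀ ℕ) :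
    MvPowerSeries.coeff s (psEval f G) =
      ∑ k ∈ Finset.range (degw s + 1),
        PowerSeries.coeff k f * MvPowerSeries.coeff s (G ^ k) := rfl

lemma coeff_mvEval2 (F : MvPowerSeries (Fin 2) R) (A B : MvPowerSeries σ R) (s : σ →₀ ℕ) :
    MvPowerSeries.coeff s (mvEval2 F A B) =
      ∑ ij ∈ Finset.range (degw s + 1) ×ˢ Finset.range (degw s + 1),
        MvPowerSeries.coeff (Finsupp.single 0 ij.1 + Finsupp.single 1 ij.2) F *
          MvPowerSeries.coeff s (A ^ ij.1 * B ^ ij.2) := rfl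

lemma coeff_psEval_ext {G : MvPowerSeries σ R} (hG : MvPowerSeries.constantCoeff G = 0)
    (f : PowerSeries R) {s : σ →₀ ℕ} {N : ℕ} (hN : degw s ≤ N) :
    MvPowerSeries.coeff s (psEval f G) =
      ∑ k ∈ Finset.range (N + 1),
        PowerSeries.coeff k f * MvPowerSeries.coeff s (G ^ k) := by
  rw [coeff_psEval]
  apply Finset.sum_subset (Finset.range_subset_range.mpr (by omega))
  intro k hk hk2
  rw [Finset.mem_range] at hk hk2
  rw [coeff_pow_eq_zero hG (by omega), mul_zero]

lemma coeff_mvEval2_ext {A B : MvPowerSeries σ R}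
    (hA : MvPowerSeries.constantCoeff A = 0) (hB : MvPowerSeries.constantCoeff B = 0)
    (F : MvPowerSeries (Fin 2) R) {s : σ →₀ ℕ} {N : ℕ} (hN : degw s ≤ N) :
    MvPowerSeries.coeff s (mvEval2 F A B) =
      ∑ ij ∈ Finset.range (N + 1) ×ˢ Finset.range (N + 1),
        MvPowerSeries.coeff (Finsupp.single 0 ij.1 + Finsupp.single 1 ij.2) F *
          MvPowerSeries.coeff s (A ^ ij.1 * B ^ ij.2) := by
  rw [coeff_mvEval2]
  apply Finset.sum_subset
  · intro x hx
    simp only [Finset.mem_product, Finset.mem_range] at hx ⊢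
    omega
  · rintro ⟨i, j⟩ hmem hnot
    simp only [Finset.mem_product, Finset.mem_range] at hmem hnot
    rw [coeff_mul_pow_eq_zero hA hB (by omega), mul_zero]



variable {M : Type*} [AddCommMonoid M]

lemma tri1 (N : ℕ) (k : ℕ → ℕ → M) (hv : ∀ a b : ℕ, N < a + b → k a b = 0) :
    ∑ j ∈ Finset.range (N + 1), ∑ a ∈ Finset.range (j + 1), k a (j - a)
      = ∑ a ∈ Finset.range (N + 1), ∑ b ∈ Finset.range (N + 1), k a b := by
  have h1 : ∀ j ∈ Finset.range (N + 1), ∑ a ∈ Finset.range (j + 1), k a (j - a)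
      = ∑ a ∈ Finset.range (N + 1), if a ≤ j then k a (j - a) else 0 := by
    intro j hj
    rw [Finset.mem_range] at hj
    rw [← Finset.sum_subset (Finset.range_subset_range.mpr (by omega : j + 1 ≤ N + 1))
      (fun a _ ha => by rw [Finset.mem_range] at ha; rw [if_neg (by omega)])]
    exact Finset.sum_congr rfl fun a ha => by
      rw [Finset.mem_range] at ha; rw [if_pos (by omega)]
  rw [Finset.sum_congr rfl h1, Finset.sum_comm]
  apply Finset.sum_congr rfl
  intro a ha
  rw [Finset.mem_range] at ha
  calc ∑ j ∈ Finset.range (N + 1), (if a ≤ j then k a (j - a) else 0)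
      = ∑ j ∈ Finset.Ico a (N + 1), (if a ≤ j then k a (j - a) else 0) := by
        refine (Finset.sum_subset ?_ ?_).symm
        · intro x hx; rw [Finset.mem_Ico] at hx; rw [Finset.mem_range]; omega
        · intro x hx hx2; rw [Finset.mem_range] at hx; rw [Finset.mem_Ico] at hx2
          rw [if_neg (by omega)]
    _ = ∑ j ∈ Finset.Ico a (N + 1), k a (j - a) := by
        apply Finset.sum_congr rfl
        intro j hj; rw [Finset.mem_Ico] at hj; rw [if_pos hj.1]
    _ = ∑ i ∈ Finset.range (N + 1 - a), k a (a + i - a) := by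
        rw [Finset.sum_Ico_eq_sum_range]
    _ = ∑ i ∈ Finset.range (N + 1 - a), k a i := by
        apply Finset.sum_congr rfl; intro i _; rw [Nat.add_sub_cancel_left]
    _ = ∑ b ∈ Finset.range (N + 1), k a b := by
        apply Finset.sum_subset (Finset.range_subset_range.mpr (by omega))
        intro b hb hb2; rw [Finset.mem_range] at hb hb2
        exact hv a b (by omega)

lemma tri2 (N : ℕ) (k : ℕ × ℕ → ℕ × ℕ → M)
    (hv : ∀ q r : ℕ × ℕ, N < q.1 + r.1 ∨ N < q.2 + r.2 → k q r = 0) :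
    ∑ ij ∈ Finset.range (N + 1) ×ˢ Finset.range (N + 1),
        ∑ q ∈ Finset.range (ij.1 + 1) ×ˢ Finset.range (ij.2 + 1),
          k q (ij.1 - q.1, ij.2 - q.2)
      = ∑ q ∈ Finset.range (N + 1) ×ˢ Finset.range (N + 1),
          ∑ r ∈ Finset.range (N + 1) ×ˢ Finset.range (N + 1), k q r := by
  rw [Finset.sum_product, Finset.sum_product]
  have step1 : ∀ i ∈ Finset.range (N + 1),
      ∑ j ∈ Finset.range (N + 1), ∑ q ∈ Finset.range (i + 1) ×ˢ Finset.range (j + 1),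
          k q (i - q.1, j - q.2)
      = ∑ a ∈ Finset.range (i + 1), ∑ c ∈ Finset.range (N + 1), ∑ d ∈ Finset.range (N + 1),
          k (a, c) (i - a, d) := by
    intro i _
    have : ∀ j, ∑ q ∈ Finset.range (i + 1) ×ˢ Finset.range (j + 1), k q (i - q.1, j - q.2)
        = ∑ a ∈ Finset.range (i + 1), ∑ c ∈ Finset.range (j + 1), k (a, c) (i - a, j - c) :=
      fun j => Finset.sum_product _ _ _
    rw [Finset.sum_congr rfl fun j _ => this j, Finset.sum_comm]
    apply Finset.sum_congr rfl
    intro a _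
    exact tri1 N (fun c d => k (a, c) (i - a, d)) (fun c d h => hv _ _ (Or.inr h))
  rw [Finset.sum_congr rfl step1]
  have step2 : ∑ i ∈ Finset.range (N + 1), ∑ a ∈ Finset.range (i + 1),
      (∑ c ∈ Finset.range (N + 1), ∑ d ∈ Finset.range (N + 1), k (a, c) (i - a, d))
      = ∑ a ∈ Finset.range (N + 1), ∑ b ∈ Finset.range (N + 1),
          ∑ c ∈ Finset.range (N + 1), ∑ d ∈ Finset.range (N + 1), k (a, c) (b, d) :=
    tri1 N (fun a b => ∑ c ∈ Finset.range (N + 1), ∑ d ∈ Finset.range (N + 1), k (a, c) (b, d))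
      (fun a b h => Finset.sum_eq_zero fun c _ => Finset.sum_eq_zero fun d _ =>
        hv _ _ (Or.inl h))
  rw [step2]
  apply Finset.sum_congr rfl; intro a _
  rw [Finset.sum_comm]
  apply Finset.sum_congr rfl; intro c _
  exact (Finset.sum_product _ _ _).symm

-- Fin 2 Finsupp helpers
lemma pair_apply0 (i j : ℕ) :
    (Finsupp.single (0 : Fin 2) i + Finsupp.single (1 : Fin 2) j : Fin 2 →₀ ℕ) 0 = i := by
  simp [Finsupp.add_apply, Finsupp.single_apply]

lemma pair_apply1 (i j : ℕ) :
    (Finsupp.single (0 : Fin 2) i + Finsupp.single (1 : Fin 2) j : Fin 2 →₀ ℕ) 1 = j := by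
  simp [Finsupp.add_apply, Finsupp.single_apply]

lemma fin2_decomp (u : Fin 2 →₀ ℕ) :
    Finsupp.single (0 : Fin 2) (u 0) + Finsupp.single 1 (u 1) = u := by
  ext x
  fin_cases x <;> simp [Finsupp.single_apply]

lemma degw_pair (i j : ℕ) :
    degw (Finsupp.single (0 : Fin 2) i + Finsupp.single 1 j) = i + j := by
  rw [degw_add]
  unfold degw
  rw [Finsupp.sum_single_index rfl, Finsupp.sum_single_index rfl]

lemma sum_antidiagonal_pair (i j : ℕ) (h : (Fin 2 →₀ ℕ) × (Fin 2 →₀ ℕ) → M) :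
    ∑ q ∈ Finset.HasAntidiagonal.antidiagonal (Finsupp.single (0 : Fin 2) i + Finsupp.single 1 j), h q
      = ∑ q ∈ Finset.range (i + 1) ×ˢ Finset.range (j + 1),
          h (Finsupp.single 0 q.1 + Finsupp.single 1 q.2,
            Finsupp.single 0 (i - q.1) + Finsupp.single 1 (j - q.2)) := by
  apply Finset.sum_nbij' (i := fun (q : (Fin 2 →₀ ℕ) × (Fin 2 →₀ ℕ)) => (q.1 0, q.1 1))
    (j := fun (q : ℕ × ℕ) => ((Finsupp.single (0 : Fin 2) q.1 + Finsupp.single (1 : Fin 2) q.2 : Fin 2 →₀ ℕ),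
      (Finsupp.single (0 : Fin 2) (i - q.1) + Finsupp.single (1 : Fin 2) (j - q.2) : Fin 2 →₀ ℕ)))
  · rintro ⟨u, w⟩ hmem
    rw [Finset.HasAntidiagonal.mem_antidiagonal] at hmem
    have h0 : u 0 + w 0 = i := by
      have := DFunLike.congr_fun hmem 0
      simpa [Finsupp.add_apply, pair_apply0] using this
    have h1 : u 1 + w 1 = j := by
      have := DFunLike.congr_fun hmem 1
      simpa [Finsupp.add_apply, pair_apply1] using this
    simp only [Finset.mem_product, Finset.mem_range]
    omega
  · rintro ⟨a, b⟩ hmem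
    simp only [Finset.mem_product, Finset.mem_range] at hmem
    rw [Finset.HasAntidiagonal.mem_antidiagonal]
    have ha : a + (i - a) = i := by omega
    have hb : b + (j - b) = j := by omega
    rw [add_add_add_comm, ← Finsupp.single_add, ← Finsupp.single_add, ha, hb]
  · rintro ⟨u, w⟩ hmem
    rw [Finset.HasAntidiagonal.mem_antidiagonal] at hmem
    have h0 : u 0 + w 0 = i := by
      simpa [Finsupp.add_apply, pair_apply0] using DFunLike.congr_fun hmem 0
    have h1 : u 1 + w 1 = j := by
      simpa [Finsupp.add_apply, pair_apply1] using DFunLike.congr_fun hmem 1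
    have : i - u 0 = w 0 := by omega
    have h2 : j - u 1 = w 1 := by omega
    simp only [Prod.mk.injEq]
    rw [this, h2]
    exact ⟨fin2_decomp u, fin2_decomp w⟩
  · rintro ⟨a, b⟩ hmem
    simp only [Prod.mk.injEq]
    rw [pair_apply0, pair_apply1]
    exact ⟨rfl, rfl⟩
  · rintro ⟨u, w⟩ hmem
    rw [Finset.HasAntidiagonal.mem_antidiagonal] at hmem
    have h0 : u 0 + w 0 = i := by
      simpa [Finsupp.add_apply, pair_apply0] using DFunLike.congr_fun hmem 0
    have h1 : u 1 + w 1 = j := by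
      simpa [Finsupp.add_apply, pair_apply1] using DFunLike.congr_fun hmem 1
    have hw0 : i - u 0 = w 0 := by omega
    have hw1 : j - u 1 = w 1 := by omega
    simp only
    rw [hw0, hw1, fin2_decomp, fin2_decomp]




lemma psEval_one (G : MvPowerSeries σ R) : psEval (1 : PowerSeries R) G = 1 := by
  apply MvPowerSeries.ext; intro s
  rw [coeff_psEval]
  have h : ∑ k ∈ Finset.range (degw s + 1),
        PowerSeries.coeff k (1 : PowerSeries R) * MvPowerSeries.coeff s (G ^ k)
      = PowerSeries.coeff 0 (1 : PowerSeries R) * MvPowerSeries.coeff s (G ^ 0) := by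
    apply Finset.sum_eq_single 0
    · intro k _ hk0
      rw [PowerSeries.coeff_one, if_neg hk0, zero_mul]
    · intro hmem; exact absurd (Finset.mem_range.mpr (by omega)) hmem
  rw [h]
  simp

lemma psEval_mul {G : MvPowerSeries σ R} (hG : MvPowerSeries.constantCoeff G = 0)
    (f g : PowerSeries R) : psEval (f * g) G = psEval f G * psEval g G := by
  classical
  apply MvPowerSeries.ext; intro s
  have lhs : MvPowerSeries.coeff s (psEval (f * g) G)
      = ∑ a ∈ Finset.range (degw s + 1), ∑ b ∈ Finset.range (degw s + 1),
          PowerSeries.coeff a f * PowerSeries.coeff b g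
            * MvPowerSeries.coeff s (G ^ (a + b)) := by
    rw [coeff_psEval]
    have e1 : ∀ k ∈ Finset.range (degw s + 1),
        PowerSeries.coeff k (f * g) * MvPowerSeries.coeff s (G ^ k)
        = ∑ a ∈ Finset.range (k + 1),
            PowerSeries.coeff a f * PowerSeries.coeff (k - a) g
              * MvPowerSeries.coeff s (G ^ (a + (k - a))) := by
      intro k _
      rw [PowerSeries.coeff_mul, Finset.Nat.sum_antidiagonal_eq_sum_range_succ_mk,
        Finset.sum_mul]
      apply Finset.sum_congr rfl
      intro a ha
      rw [Finset.mem_range] at ha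
      rw [Nat.add_sub_cancel' (by omega : a ≤ k)]
    rw [Finset.sum_congr rfl e1]
    exact tri1 (degw s)
      (fun a b => PowerSeries.coeff a f * PowerSeries.coeff b g
        * MvPowerSeries.coeff s (G ^ (a + b)))
      (fun a b h => by rw [coeff_pow_eq_zero hG (by omega), mul_zero])
  have rhs : MvPowerSeries.coeff s (psEval f G * psEval g G)
      = ∑ a ∈ Finset.range (degw s + 1), ∑ b ∈ Finset.range (degw s + 1),
          PowerSeries.coeff a f * PowerSeries.coeff b g
            * MvPowerSeries.coeff s (G ^ (a + b)) := by
    rw [MvPowerSeries.coeff_mul]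
    have e2 : ∀ p ∈ Finset.HasAntidiagonal.antidiagonal s,
        MvPowerSeries.coeff p.1 (psEval f G) * MvPowerSeries.coeff p.2 (psEval g G)
        = ∑ a ∈ Finset.range (degw s + 1), ∑ b ∈ Finset.range (degw s + 1),
            (PowerSeries.coeff a f * MvPowerSeries.coeff p.1 (G ^ a))
              * (PowerSeries.coeff b g * MvPowerSeries.coeff p.2 (G ^ b)) := by
      intro p hp
      rw [Finset.HasAntidiagonal.mem_antidiagonal] at hp
      have hdd : degw p.1 + degw p.2 = degw s := by rw [← degw_add, hp]
      rw [coeff_psEval_ext hG f (by omega : degw p.1 ≤ degw s),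
        coeff_psEval_ext hG g (by omega : degw p.2 ≤ degw s), Finset.sum_mul_sum]
    rw [Finset.sum_congr rfl e2, Finset.sum_comm]
    apply Finset.sum_congr rfl; intro a _
    rw [Finset.sum_comm]
    apply Finset.sum_congr rfl; intro b _
    calc ∑ p ∈ Finset.HasAntidiagonal.antidiagonal s,
          (PowerSeries.coeff a f * MvPowerSeries.coeff p.1 (G ^ a))
            * (PowerSeries.coeff b g * MvPowerSeries.coeff p.2 (G ^ b))
        = ∑ p ∈ Finset.HasAntidiagonal.antidiagonal s,
            PowerSeries.coeff a f * PowerSeries.coeff b g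
              * (MvPowerSeries.coeff p.1 (G ^ a) * MvPowerSeries.coeff p.2 (G ^ b)) := by
          apply Finset.sum_congr rfl; intro p _; ring
      _ = PowerSeries.coeff a f * PowerSeries.coeff b g
            * MvPowerSeries.coeff s (G ^ (a + b)) := by
          rw [← Finset.mul_sum, ← MvPowerSeries.coeff_mul, ← pow_add]
  rw [lhs, rhs]

lemma psEval_pow {G : MvPowerSeries σ R} (hG : MvPowerSeries.constantCoeff G = 0)
    (f : PowerSeries R) (k : ℕ) : psEval (f ^ k) G = (psEval f G) ^ k := by
  induction k with
  | zero => simpa using psEval_one G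
  | succ k ih => rw [pow_succ, pow_succ, psEval_mul hG, ih]

lemma constantCoeff_psEval (f : PowerSeries R) (G : MvPowerSeries σ R) :
    MvPowerSeries.constantCoeff (psEval f G) = PowerSeries.coeff 0 f := by
  rw [← MvPowerSeries.coeff_zero_eq_constantCoeff_apply, coeff_psEval, degw_zero]
  simp

lemma constantCoeff_mvEval2 (F : MvPowerSeries (Fin 2) R) (A B : MvPowerSeries σ R) :
    MvPowerSeries.constantCoeff (mvEval2 F A B)
      = MvPowerSeries.coeff (0 : Fin 2 →₀ ℕ) F := by
  rw [← MvPowerSeries.coeff_zero_eq_constantCoeff_apply, coeff_mvEval2, degw_zero]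
  simp

lemma pair_eq_iff (i j i' j' : ℕ) :
    (Finsupp.single (0 : Fin 2) i + Finsupp.single 1 j : Fin 2 →₀ ℕ)
      = Finsupp.single (0 : Fin 2) i' + Finsupp.single 1 j' ↔ i = i' ∧ j = j' := by
  constructor
  · intro h
    constructor
    · have := DFunLike.congr_fun h 0
      rwa [pair_apply0, pair_apply0] at this
    · have := DFunLike.congr_fun h 1
      rwa [pair_apply1, pair_apply1] at this
  · rintro ⟨rfl, rfl⟩; rfl

lemma pair_eq_zero_iff (i j : ℕ) :
    (Finsupp.single (0 : Fin 2) i + Finsupp.single 1 j : Fin 2 →₀ ℕ) = 0 ↔ i = 0 ∧ j = 0 := by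
  have h0 : (0 : Fin 2 →₀ ℕ)
      = Finsupp.single (0 : Fin 2) 0 + Finsupp.single 1 0 := by simp
  rw [h0, pair_eq_iff]

lemma mvEval2_one (A B : MvPowerSeries σ R) : mvEval2 (1 : MvPowerSeries (Fin 2) R) A B = 1 := by
  classical
  apply MvPowerSeries.ext; intro s
  rw [coeff_mvEval2]
  have h : ∑ ij ∈ Finset.range (degw s + 1) ×ˢ Finset.range (degw s + 1),
        MvPowerSeries.coeff (Finsupp.single 0 ij.1 + Finsupp.single 1 ij.2)
          (1 : MvPowerSeries (Fin 2) R) * MvPowerSeries.coeff s (A ^ ij.1 * B ^ ij.2)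
      = MvPowerSeries.coeff (Finsupp.single (0 : Fin 2) 0 + Finsupp.single 1 0)
          (1 : MvPowerSeries (Fin 2) R) * MvPowerSeries.coeff s (A ^ 0 * B ^ 0) := by
    apply Finset.sum_eq_single (0, 0)
    · rintro ⟨i, j⟩ _ hne
      rw [MvPowerSeries.coeff_one, if_neg, zero_mul]
      rw [pair_eq_zero_iff]
      rintro ⟨rfl, rfl⟩; exact hne rfl
    · intro hmem
      exact absurd (by simp [Finset.mem_product] : ((0,0) : ℕ × ℕ) ∈
        Finset.range (degw s + 1) ×ˢ Finset.range (degw s + 1)) hmem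
  rw [h]
  simp [pair_eq_zero_iff]

lemma mvEval2_mul {A B : MvPowerSeries σ R}
    (hA : MvPowerSeries.constantCoeff A = 0) (hB : MvPowerSeries.constantCoeff B = 0)
    (F G : MvPowerSeries (Fin 2) R) :
    mvEval2 (F * G) A B = mvEval2 F A B * mvEval2 G A B := by
  classical
  apply MvPowerSeries.ext; intro s
  have lhs : MvPowerSeries.coeff s (mvEval2 (F * G) A B)
      = ∑ q ∈ Finset.range (degw s + 1) ×ˢ Finset.range (degw s + 1),
          ∑ r ∈ Finset.range (degw s + 1) ×ˢ Finset.range (degw s + 1),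
            MvPowerSeries.coeff (Finsupp.single 0 q.1 + Finsupp.single 1 q.2) F *
              MvPowerSeries.coeff (Finsupp.single 0 r.1 + Finsupp.single 1 r.2) G *
                MvPowerSeries.coeff s (A ^ (q.1 + r.1) * B ^ (q.2 + r.2)) := by
    rw [coeff_mvEval2]
    have e1 : ∀ ij ∈ Finset.range (degw s + 1) ×ˢ Finset.range (degw s + 1),
        MvPowerSeries.coeff (Finsupp.single 0 ij.1 + Finsupp.single 1 ij.2) (F * G) *
            MvPowerSeries.coeff s (A ^ ij.1 * B ^ ij.2)
        = ∑ q ∈ Finset.range (ij.1 + 1) ×ˢ Finset.range (ij.2 + 1),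
            MvPowerSeries.coeff (Finsupp.single 0 q.1 + Finsupp.single 1 q.2) F *
              MvPowerSeries.coeff
                (Finsupp.single 0 (ij.1 - q.1) + Finsupp.single 1 (ij.2 - q.2)) G *
                MvPowerSeries.coeff s
                  (A ^ (q.1 + (ij.1 - q.1)) * B ^ (q.2 + (ij.2 - q.2))) := by
      rintro ⟨i, j⟩ _
      dsimp only
      rw [MvPowerSeries.coeff_mul, sum_antidiagonal_pair i j
        (fun q => MvPowerSeries.coeff q.1 F * MvPowerSeries.coeff q.2 G), Finset.sum_mul]
      apply Finset.sum_congr rfl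
      rintro ⟨a, b⟩ hq
      simp only [Finset.mem_product, Finset.mem_range] at hq
      dsimp only
      rw [Nat.add_sub_cancel' (by omega : a ≤ i), Nat.add_sub_cancel' (by omega : b ≤ j)]
    rw [Finset.sum_congr rfl e1]
    exact tri2 (degw s)
      (fun q r => MvPowerSeries.coeff (Finsupp.single 0 q.1 + Finsupp.single 1 q.2) F *
        MvPowerSeries.coeff (Finsupp.single 0 r.1 + Finsupp.single 1 r.2) G *
          MvPowerSeries.coeff s (A ^ (q.1 + r.1) * B ^ (q.2 + r.2)))
      (fun q r h => by
        rw [coeff_mul_pow_eq_zero hA hB (by omega), mul_zero])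
  have rhs : MvPowerSeries.coeff s (mvEval2 F A B * mvEval2 G A B)
      = ∑ q ∈ Finset.range (degw s + 1) ×ˢ Finset.range (degw s + 1),
          ∑ r ∈ Finset.range (degw s + 1) ×ˢ Finset.range (degw s + 1),
            MvPowerSeries.coeff (Finsupp.single 0 q.1 + Finsupp.single 1 q.2) F *
              MvPowerSeries.coeff (Finsupp.single 0 r.1 + Finsupp.single 1 r.2) G *
                MvPowerSeries.coeff s (A ^ (q.1 + r.1) * B ^ (q.2 + r.2)) := by
    rw [MvPowerSeries.coeff_mul]
    have e2 : ∀ p ∈ Finset.HasAntidiagonal.antidiagonal s,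
        MvPowerSeries.coeff p.1 (mvEval2 F A B) * MvPowerSeries.coeff p.2 (mvEval2 G A B)
        = ∑ q ∈ Finset.range (degw s + 1) ×ˢ Finset.range (degw s + 1),
            ∑ r ∈ Finset.range (degw s + 1) ×ˢ Finset.range (degw s + 1),
              (MvPowerSeries.coeff (Finsupp.single 0 q.1 + Finsupp.single 1 q.2) F *
                MvPowerSeries.coeff p.1 (A ^ q.1 * B ^ q.2)) *
              (MvPowerSeries.coeff (Finsupp.single 0 r.1 + Finsupp.single 1 r.2) G *
                MvPowerSeries.coeff p.2 (A ^ r.1 * B ^ r.2)) := by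
      intro p hp
      rw [Finset.HasAntidiagonal.mem_antidiagonal] at hp
      have hdd : degw p.1 + degw p.2 = degw s := by rw [← degw_add, hp]
      rw [coeff_mvEval2_ext hA hB F (by omega : degw p.1 ≤ degw s),
        coeff_mvEval2_ext hA hB G (by omega : degw p.2 ≤ degw s), Finset.sum_mul_sum]
    rw [Finset.sum_congr rfl e2, Finset.sum_comm]
    apply Finset.sum_congr rfl; intro q _
    rw [Finset.sum_comm]
    apply Finset.sum_congr rfl; intro r _
    calc ∑ p ∈ Finset.HasAntidiagonal.antidiagonal s,
          (MvPowerSeries.coeff (Finsupp.single 0 q.1 + Finsupp.single 1 q.2) F *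
            MvPowerSeries.coeff p.1 (A ^ q.1 * B ^ q.2)) *
          (MvPowerSeries.coeff (Finsupp.single 0 r.1 + Finsupp.single 1 r.2) G *
            MvPowerSeries.coeff p.2 (A ^ r.1 * B ^ r.2))
        = ∑ p ∈ Finset.HasAntidiagonal.antidiagonal s,
            MvPowerSeries.coeff (Finsupp.single 0 q.1 + Finsupp.single 1 q.2) F *
              MvPowerSeries.coeff (Finsupp.single 0 r.1 + Finsupp.single 1 r.2) G *
                (MvPowerSeries.coeff p.1 (A ^ q.1 * B ^ q.2) *
                  MvPowerSeries.coeff p.2 (A ^ r.1 * B ^ r.2)) := by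
          apply Finset.sum_congr rfl; intro p _; ring
      _ = MvPowerSeries.coeff (Finsupp.single 0 q.1 + Finsupp.single 1 q.2) F *
            MvPowerSeries.coeff (Finsupp.single 0 r.1 + Finsupp.single 1 r.2) G *
              MvPowerSeries.coeff s (A ^ (q.1 + r.1) * B ^ (q.2 + r.2)) := by
          rw [← Finset.mul_sum, ← MvPowerSeries.coeff_mul]
          congr 2
          ring
  rw [lhs, rhs]

lemma mvEval2_pow {A B : MvPowerSeries σ R}
    (hA : MvPowerSeries.constantCoeff A = 0) (hB : MvPowerSeries.constantCoeff B = 0)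
    (F : MvPowerSeries (Fin 2) R) (k : ℕ) :
    mvEval2 (F ^ k) A B = (mvEval2 F A B) ^ k := by
  induction k with
  | zero => simpa using mvEval2_one A B
  | succ k ih => rw [pow_succ, pow_succ, mvEval2_mul hA hB, ih]

lemma mvEval2_X0 {A B : MvPowerSeries σ R}
    (hA : MvPowerSeries.constantCoeff A = 0) (hB : MvPowerSeries.constantCoeff B = 0) :
    mvEval2 (MvPowerSeries.X 0 : MvPowerSeries (Fin 2) R) A B = A := by
  classical
  apply MvPowerSeries.ext; intro s
  rw [coeff_mvEval2_ext hA hB _ (Nat.le_succ (degw s))]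
  have h : ∑ ij ∈ Finset.range (degw s + 1 + 1) ×ˢ Finset.range (degw s + 1 + 1),
        MvPowerSeries.coeff (Finsupp.single 0 ij.1 + Finsupp.single 1 ij.2)
          (MvPowerSeries.X 0 : MvPowerSeries (Fin 2) R) *
            MvPowerSeries.coeff s (A ^ ij.1 * B ^ ij.2)
      = MvPowerSeries.coeff (Finsupp.single (0 : Fin 2) 1 + Finsupp.single 1 0)
          (MvPowerSeries.X 0 : MvPowerSeries (Fin 2) R) *
            MvPowerSeries.coeff s (A ^ 1 * B ^ 0) := by
    apply Finset.sum_eq_single (1, 0)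
    · rintro ⟨i, j⟩ _ hne
      rw [MvPowerSeries.coeff_X, if_neg, zero_mul]
      intro hc
      have : i = 1 ∧ j = 0 := by
        rw [← pair_eq_iff i j 1 0]
        rw [hc]
        simp
      exact hne (by simp [this.1, this.2])
    · intro hmem
      refine absurd ?_ hmem
      simp only [Finset.mem_product, Finset.mem_range]
      omega
  rw [h, MvPowerSeries.coeff_X, if_pos (by simp), pow_one, pow_zero, mul_one, one_mul]

lemma mvEval2_X1 {A B : MvPowerSeries σ R}
    (hA : MvPowerSeries.constantCoeff A = 0) (hB : MvPowerSeries.constantCoeff B = 0) :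
    mvEval2 (MvPowerSeries.X 1 : MvPowerSeries (Fin 2) R) A B = B := by
  classical
  apply MvPowerSeries.ext; intro s
  rw [coeff_mvEval2_ext hA hB _ (Nat.le_succ (degw s))]
  have h : ∑ ij ∈ Finset.range (degw s + 1 + 1) ×ˢ Finset.range (degw s + 1 + 1),
        MvPowerSeries.coeff (Finsupp.single 0 ij.1 + Finsupp.single 1 ij.2)
          (MvPowerSeries.X 1 : MvPowerSeries (Fin 2) R) *
            MvPowerSeries.coeff s (A ^ ij.1 * B ^ ij.2)
      = MvPowerSeries.coeff (Finsupp.single (0 : Fin 2) 0 + Finsupp.single 1 1)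
          (MvPowerSeries.X 1 : MvPowerSeries (Fin 2) R) *
            MvPowerSeries.coeff s (A ^ 0 * B ^ 1) := by
    apply Finset.sum_eq_single (0, 1)
    · rintro ⟨i, j⟩ _ hne
      rw [MvPowerSeries.coeff_X, if_neg, zero_mul]
      intro hc
      have : i = 0 ∧ j = 1 := by
        rw [← pair_eq_iff i j 0 1]
        rw [hc]
        simp
      exact hne (by simp [this.1, this.2])
    · intro hmem
      refine absurd ?_ hmem
      simp only [Finset.mem_product, Finset.mem_range]
      omega
  rw [h, MvPowerSeries.coeff_X, if_pos (by simp)]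
  simp

lemma mvEval2_psEval {A B : MvPowerSeries σ R}
    (hA : MvPowerSeries.constantCoeff A = 0) (hB : MvPowerSeries.constantCoeff B = 0)
    {H : MvPowerSeries (Fin 2) R} (hH : MvPowerSeries.constantCoeff H = 0)
    (u : PowerSeries R) :
    mvEval2 (psEval u H) A B = psEval u (mvEval2 H A B) := by
  classical
  apply MvPowerSeries.ext; intro s
  have hc0 : MvPowerSeries.constantCoeff (mvEval2 H A B) = 0 := by
    rw [constantCoeff_mvEval2, MvPowerSeries.coeff_zero_eq_constantCoeff, hH]
  rw [coeff_mvEval2, coeff_psEval_ext hc0 u (by omega : degw s ≤ 2 * degw s)]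
  have e1 : ∀ ij ∈ Finset.range (degw s + 1) ×ˢ Finset.range (degw s + 1),
      MvPowerSeries.coeff (Finsupp.single 0 ij.1 + Finsupp.single 1 ij.2) (psEval u H) *
          MvPowerSeries.coeff s (A ^ ij.1 * B ^ ij.2)
      = ∑ k ∈ Finset.range (2 * degw s + 1),
          PowerSeries.coeff k u *
            (MvPowerSeries.coeff (Finsupp.single 0 ij.1 + Finsupp.single 1 ij.2) (H ^ k) *
              MvPowerSeries.coeff s (A ^ ij.1 * B ^ ij.2)) := by
    rintro ⟨i, j⟩ hij
    simp only [Finset.mem_product, Finset.mem_range] at hij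
    dsimp only
    rw [coeff_psEval_ext (N := 2 * degw s) hH u (by rw [degw_pair]; omega), Finset.sum_mul]
    apply Finset.sum_congr rfl
    intro k _
    ring
  rw [Finset.sum_congr rfl e1, Finset.sum_comm]
  apply Finset.sum_congr rfl
  intro k _
  rw [← Finset.mul_sum, ← coeff_mvEval2, mvEval2_pow hA hB]

lemma mvEval2_mvEval2 {A B : MvPowerSeries σ R}
    (hA : MvPowerSeries.constantCoeff A = 0) (hB : MvPowerSeries.constantCoeff B = 0)
    {G1 G2 : MvPowerSeries (Fin 2) R}
    (h1 : MvPowerSeries.constantCoeff G1 = 0)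
    (h2 : MvPowerSeries.constantCoeff G2 = 0)
    (F : MvPowerSeries (Fin 2) R) :
    mvEval2 (mvEval2 F G1 G2) A B = mvEval2 F (mvEval2 G1 A B) (mvEval2 G2 A B) := by
  classical
  apply MvPowerSeries.ext; intro s
  have hc1 : MvPowerSeries.constantCoeff (mvEval2 G1 A B) = 0 := by
    rw [constantCoeff_mvEval2, MvPowerSeries.coeff_zero_eq_constantCoeff, h1]
  have hc2 : MvPowerSeries.constantCoeff (mvEval2 G2 A B) = 0 := by
    rw [constantCoeff_mvEval2, MvPowerSeries.coeff_zero_eq_constantCoeff, h2]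
  rw [coeff_mvEval2, coeff_mvEval2_ext hc1 hc2 F (by omega : degw s ≤ 2 * degw s)]
  have e1 : ∀ ij ∈ Finset.range (degw s + 1) ×ˢ Finset.range (degw s + 1),
      MvPowerSeries.coeff (Finsupp.single 0 ij.1 + Finsupp.single 1 ij.2)
          (mvEval2 F G1 G2) * MvPowerSeries.coeff s (A ^ ij.1 * B ^ ij.2)
      = ∑ ab ∈ Finset.range (2 * degw s + 1) ×ˢ Finset.range (2 * degw s + 1),
          MvPowerSeries.coeff (Finsupp.single 0 ab.1 + Finsupp.single 1 ab.2) F *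
            (MvPowerSeries.coeff (Finsupp.single 0 ij.1 + Finsupp.single 1 ij.2)
              (G1 ^ ab.1 * G2 ^ ab.2) *
                MvPowerSeries.coeff s (A ^ ij.1 * B ^ ij.2)) := by
    rintro ⟨i, j⟩ hij
    simp only [Finset.mem_product, Finset.mem_range] at hij
    dsimp only
    rw [coeff_mvEval2_ext (N := 2 * degw s) h1 h2 F (by rw [degw_pair]; omega), Finset.sum_mul]
    apply Finset.sum_congr rfl
    intro ab _
    ring
  rw [Finset.sum_congr rfl e1, Finset.sum_comm]
  apply Finset.sum_congr rfl
  intro ab _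
  rw [← Finset.mul_sum, ← coeff_mvEval2, mvEval2_mul hA hB, mvEval2_pow hA hB, mvEval2_pow hA hB]


-- ===== PowerSeries side =====

lemma ps_coeff_pow_eq_zero {w : PowerSeries R} (hw : PowerSeries.constantCoeff w = 0)
    {k j : ℕ} (h : k < j) : PowerSeries.coeff k (w ^ j) = 0 := by
  have hX : (PowerSeries.X : PowerSeries R) ∣ w := PowerSeries.X_dvd_iff.mpr hw
  have : (PowerSeries.X : PowerSeries R) ^ j ∣ w ^ j := pow_dvd_pow_of_dvd hX j
  exact PowerSeries.X_pow_dvd_iff.mp this k h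

lemma coeff_psComp (u w : PowerSeries R) (n : ℕ) :
    PowerSeries.coeff n (psComp u w)
      = ∑ k ∈ Finset.range (n + 1),
          PowerSeries.coeff k u * PowerSeries.coeff n (w ^ k) :=
  PowerSeries.coeff_mk _ _

lemma degw_single_unit (n : ℕ) : degw (Finsupp.single () n) = n := by
  unfold degw
  rw [Finsupp.sum_single_index rfl]

lemma psComp_eq_psEval (u w : PowerSeries R) :
    psComp u w = psEval u (w : MvPowerSeries Unit R) := by
  apply PowerSeries.ext; intro n
  rw [coeff_psComp]
  have : PowerSeries.coeff n (psEval u (w : MvPowerSeries Unit R))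
      = MvPowerSeries.coeff (Finsupp.single () n) (psEval u (w : MvPowerSeries Unit R)) := rfl
  rw [this, coeff_psEval, degw_single_unit]
  rfl

lemma psEval_psComp {G : MvPowerSeries σ R} (hG : MvPowerSeries.constantCoeff G = 0)
    {w : PowerSeries R} (hw : PowerSeries.constantCoeff w = 0) (u : PowerSeries R) :
    psEval (psComp u w) G = psEval u (psEval w G) := by
  classical
  apply MvPowerSeries.ext; intro s
  have hc0 : MvPowerSeries.constantCoeff (psEval w G) = 0 := by
    rw [constantCoeff_psEval, PowerSeries.coeff_zero_eq_constantCoeff, hw]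
  rw [coeff_psEval, coeff_psEval_ext (N := degw s) hc0 u (le_refl _)]
  have e1 : ∀ k ∈ Finset.range (degw s + 1),
      PowerSeries.coeff k (psComp u w) * MvPowerSeries.coeff s (G ^ k)
      = ∑ j ∈ Finset.range (degw s + 1),
          PowerSeries.coeff j u *
            (PowerSeries.coeff k (w ^ j) * MvPowerSeries.coeff s (G ^ k)) := by
    intro k hk
    rw [Finset.mem_range] at hk
    rw [coeff_psComp, Finset.sum_mul]
    rw [Finset.sum_subset (Finset.range_subset_range.mpr (by omega : k + 1 ≤ degw s + 1))]
    · apply Finset.sum_congr rfl; intro j _; ring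
    · intro j hj hj2
      rw [Finset.mem_range] at hj hj2
      rw [ps_coeff_pow_eq_zero hw (by omega), mul_zero, zero_mul]
  rw [Finset.sum_congr rfl e1, Finset.sum_comm]
  apply Finset.sum_congr rfl
  intro j _
  rw [← Finset.mul_sum]
  congr 1
  rw [← psEval_pow hG]
  rw [coeff_psEval]

lemma psComp_assoc {u w t : PowerSeries R} (hw : PowerSeries.constantCoeff w = 0)
    (ht : PowerSeries.constantCoeff t = 0) :
    psComp (psComp u w) t = psComp u (psComp w t) := by
  have hG : MvPowerSeries.constantCoeff (t : MvPowerSeries Unit R) = 0 := ht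
  calc psComp (psComp u w) t
      = psEval (psComp u w) (t : MvPowerSeries Unit R) := psComp_eq_psEval _ _
    _ = psEval u (psEval w (t : MvPowerSeries Unit R)) := psEval_psComp hG hw u
    _ = psComp u (psComp w t) := by rw [psComp_eq_psEval w t, ← psComp_eq_psEval]

lemma coeff_zero_psComp (u w : PowerSeries R) :
    PowerSeries.coeff 0 (psComp u w) = PowerSeries.coeff 0 u := by
  rw [coeff_psComp]
  simp

lemma coeff_one_psComp (u w : PowerSeries R) :
    PowerSeries.coeff 1 (psComp u w)
      = PowerSeries.coeff 1 u * PowerSeries.coeff 1 w := by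
  rw [coeff_psComp]
  rw [Finset.sum_range_succ, Finset.sum_range_one]
  simp [PowerSeries.coeff_one]

lemma psComp_zero_left (w : PowerSeries R) : psComp 0 w = 0 := by
  apply PowerSeries.ext; intro n
  rw [coeff_psComp]
  simp

lemma psComp_zero_right {w : PowerSeries R} (hw : PowerSeries.coeff 0 w = 0) :
    psComp w 0 = 0 := by
  apply PowerSeries.ext; intro n
  rw [coeff_psComp]
  rw [Finset.sum_eq_zero]
  · simp
  · intro k hk
    rcases Nat.eq_zero_or_pos k with rfl | hkpos
    · rw [pow_zero]
      rcases Nat.eq_zero_or_pos n with rfl | hnpos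
      · rw [PowerSeries.coeff_zero_eq_constantCoeff] at hw ⊢
        simp [hw]
      · simp [PowerSeries.coeff_one, Nat.pos_iff_ne_zero.mp hnpos]
    · rw [zero_pow (by omega), map_zero, mul_zero]

-- coefficient of g^n at n
lemma coeff_pow_self {g : PowerSeries R} (hg0 : PowerSeries.coeff 0 g = 0) (n : ℕ) :
    PowerSeries.coeff n (g ^ n) = (PowerSeries.coeff 1 g) ^ n := by
  induction n with
  | zero => simp
  | succ n ih =>
    rw [pow_succ, PowerSeries.coeff_mul, Finset.Nat.sum_antidiagonal_eq_sum_range_succ_mk]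
    have h : ∑ k ∈ Finset.range (n + 2),
          PowerSeries.coeff k (g ^ n) * PowerSeries.coeff (n + 1 - k) g
        = PowerSeries.coeff n (g ^ n) * PowerSeries.coeff (n + 1 - n) g := by
      apply Finset.sum_eq_single n
      · intro k hk hkn
        rw [Finset.mem_range] at hk
        rcases Nat.lt_or_ge k n with hlt | hge
        · rw [ps_coeff_pow_eq_zero (by rwa [PowerSeries.coeff_zero_eq_constantCoeff] at hg0) hlt,
            zero_mul]
        · have hk1 : k = n + 1 := by omega
          subst hk1
          rw [Nat.sub_self, hg0, mul_zero]
      · intro hmem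
        exact absurd (Finset.mem_range.mpr (by omega)) hmem
    rw [h]
    have : n + 1 - n = 1 := by omega
    rw [this, ih, pow_succ]


-- ===== rigidity and endo lemmas =====

lemma cc {f : PowerSeries R} (h : PowerSeries.coeff 0 f = 0) :
    PowerSeries.constantCoeff f = 0 := by
  rw [← PowerSeries.coeff_zero_eq_constantCoeff_apply]; exact h

lemma rigidity {O : Type*} [CommRing O] [IsDomain O] {π : O} (hne : π ≠ 0) (hnu : ¬IsUnit π)
    {g : PowerSeries O} (hg0 : PowerSeries.coeff 0 g = 0) (hg1 : PowerSeries.coeff 1 g = π)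
    {f f' : PowerSeries O} (hf0 : PowerSeries.coeff 0 f = 0)
    (hf'0 : PowerSeries.coeff 0 f' = 0)
    (hfc : psComp f g = psComp g f) (hf'c : psComp f' g = psComp g f')
    (h1 : PowerSeries.coeff 1 f = PowerSeries.coeff 1 f') : f = f' := by
  apply PowerSeries.ext
  intro n
  induction n using Nat.strong_induction_on with
  | _ n ih =>
  match n, ih with
  | 0, _ => rw [hf0, hf'0]
  | 1, _ => exact h1
  | (m+2), ih =>
    set n := m + 2 with hn
    have hL : PowerSeries.coeff n (psComp f g) - PowerSeries.coeff n (psComp f' g)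
        = (PowerSeries.coeff n f - PowerSeries.coeff n f') * π ^ n := by
      rw [coeff_psComp, coeff_psComp, ← Finset.sum_sub_distrib]
      have e : ∀ k ∈ Finset.range (n + 1),
          PowerSeries.coeff k f * PowerSeries.coeff n (g ^ k)
            - PowerSeries.coeff k f' * PowerSeries.coeff n (g ^ k)
          = (PowerSeries.coeff k f - PowerSeries.coeff k f')
              * PowerSeries.coeff n (g ^ k) := fun k _ => (sub_mul _ _ _).symm
      rw [Finset.sum_congr rfl e]
      rw [Finset.sum_eq_single n]
      · rw [coeff_pow_self hg0, hg1]
      · intro k hk hkn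
        rw [Finset.mem_range] at hk
        rw [ih k (by omega), sub_self, zero_mul]
      · intro hmem
        exact absurd (Finset.mem_range.mpr (by omega)) hmem
    have hR : PowerSeries.coeff n (psComp g f) - PowerSeries.coeff n (psComp g f')
        = π * (PowerSeries.coeff n f - PowerSeries.coeff n f') := by
      rw [coeff_psComp, coeff_psComp, ← Finset.sum_sub_distrib]
      have e : ∀ k ∈ Finset.range (n + 1),
          PowerSeries.coeff k g * PowerSeries.coeff n (f ^ k)
            - PowerSeries.coeff k g * PowerSeries.coeff n (f' ^ k)
          = PowerSeries.coeff k g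
              * (PowerSeries.coeff n (f ^ k) - PowerSeries.coeff n (f' ^ k)) :=
        fun k _ => (mul_sub _ _ _).symm
      rw [Finset.sum_congr rfl e]
      rw [Finset.sum_eq_single 1]
      · rw [hg1, pow_one, pow_one]
      · intro k hk hk1
        rw [Finset.mem_range] at hk
        rcases Nat.eq_zero_or_pos k with rfl | hkpos
        · rw [pow_zero, pow_zero, sub_self, mul_zero]
        · -- k ≥ 2
          have hk2 : 2 ≤ k := by omega
          have hdvd : (PowerSeries.X : PowerSeries O) ^ ((k - 1) + n) ∣ f ^ k - f' ^ k := by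
            have hgeom := geom_sum₂_mul f f' k
            rw [← hgeom, pow_add]
            apply mul_dvd_mul
            · -- X^(k-1) ∣ geom sum
              apply Finset.dvd_sum
              intro i hi
              rw [Finset.mem_range] at hi
              have d1 : (PowerSeries.X : PowerSeries O) ^ i ∣ f ^ i :=
                pow_dvd_pow_of_dvd (PowerSeries.X_dvd_iff.mpr (cc hf0)) i
              have d2 : (PowerSeries.X : PowerSeries O) ^ (k - 1 - i) ∣ f' ^ (k - 1 - i) :=
                pow_dvd_pow_of_dvd (PowerSeries.X_dvd_iff.mpr (cc hf'0)) _
              have : (PowerSeries.X : PowerSeries O) ^ (k - 1)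
                  = PowerSeries.X ^ i * PowerSeries.X ^ (k - 1 - i) := by
                rw [← pow_add]
                congr 1
                omega
              rw [this]
              exact mul_dvd_mul d1 d2
            · rw [PowerSeries.X_pow_dvd_iff]
              intro m hm
              rw [map_sub, ih m hm, sub_self]
          have : PowerSeries.coeff n (f ^ k - f' ^ k) = 0 :=
            PowerSeries.X_pow_dvd_iff.mp hdvd n (by omega)
          rw [map_sub] at this
          rw [sub_eq_zero] at this
          rw [this, sub_self, mul_zero]
      · intro hmem
        exact absurd (Finset.mem_range.mpr (by omega)) hmem
    have hE : (PowerSeries.coeff n f - PowerSeries.coeff n f') * π ^ n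
        = π * (PowerSeries.coeff n f - PowerSeries.coeff n f') := by
      rw [← hL, ← hR, hfc, hf'c]
    set δ := PowerSeries.coeff n f - PowerSeries.coeff n f' with hδ
    have hfact : δ * π * (π ^ (m + 1) - 1) = 0 := by
      have : δ * π ^ n - π * δ = 0 := by rw [hE, sub_self]
      calc δ * π * (π ^ (m + 1) - 1) = δ * π ^ n - π * δ := by
            rw [hn]; ring
        _ = 0 := this
    have hδ0 : δ = 0 := by
      rcases mul_eq_zero.mp hfact with h | h
      · rcases mul_eq_zero.mp h with h' | h'
        · exact h'
        · exact absurd h' hne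
      · exfalso
        apply hnu
        have : π ^ (m + 1) = 1 := by
          have := sub_eq_zero.mp h
          exact this
        exact IsUnit.of_mul_eq_one (π ^ m) (by rw [← pow_succ']; exact this)
    have := sub_eq_zero.mp hδ0
    exact this

lemma psEval_zero (G : MvPowerSeries σ R) : psEval (0 : PowerSeries R) G = 0 := by
  apply MvPowerSeries.ext; intro s
  rw [coeff_psEval]
  simp

lemma mvEval2_zero_zero {F : MvPowerSeries (Fin 2) R}
    (hF0 : MvPowerSeries.constantCoeff F = 0) :
    mvEval2 F (0 : MvPowerSeries σ R) (0 : MvPowerSeries σ R) = 0 := by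
  classical
  apply MvPowerSeries.ext; intro s
  rw [coeff_mvEval2]
  rw [map_zero]
  apply Finset.sum_eq_zero
  rintro ⟨i, j⟩ _
  by_cases hi : i = 0
  · by_cases hj : j = 0
    · subst hi; subst hj
      simp only [pow_zero, mul_one]
      have : (Finsupp.single (0 : Fin 2) 0 + Finsupp.single 1 0 : Fin 2 →₀ ℕ) = 0 := by simp
      rw [this, MvPowerSeries.coeff_zero_eq_constantCoeff, hF0, zero_mul]
    · subst hi
      rw [zero_pow hj, pow_zero, one_mul, map_zero, mul_zero]
  · rw [zero_pow hi, zero_mul, map_zero, mul_zero]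

lemma isEndo_zero {F : MvPowerSeries (Fin 2) R}
    (hF0 : MvPowerSeries.constantCoeff F = 0) : IsEndo F (0 : PowerSeries R) := by
  constructor
  · simp
  · rw [psEval_zero, psEval_zero, psEval_zero, mvEval2_zero_zero hF0]

lemma isEndo_comp {F : MvPowerSeries (Fin 2) R}
    (hF0 : MvPowerSeries.constantCoeff F = 0)
    {u w : PowerSeries R} (hu : IsEndo F u) (hw : IsEndo F w) : IsEndo F (psComp u w) := by
  obtain ⟨hu0, huE⟩ := hu
  obtain ⟨hw0, hwE⟩ := hw
  have hX0 : MvPowerSeries.constantCoeff (MvPowerSeries.X 0 : MvPowerSeries (Fin 2) R) = 0 :=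
    MvPowerSeries.constantCoeff_X 0
  have hX1 : MvPowerSeries.constantCoeff (MvPowerSeries.X 1 : MvPowerSeries (Fin 2) R) = 0 :=
    MvPowerSeries.constantCoeff_X 1
  have hW0 : MvPowerSeries.constantCoeff
      (psEval w (MvPowerSeries.X 0 : MvPowerSeries (Fin 2) R)) = 0 := by
    rw [constantCoeff_psEval]; exact hw0
  have hW1 : MvPowerSeries.constantCoeff
      (psEval w (MvPowerSeries.X 1 : MvPowerSeries (Fin 2) R)) = 0 := by
    rw [constantCoeff_psEval]; exact hw0
  have hU0 : MvPowerSeries.constantCoeff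
      (psEval u (MvPowerSeries.X 0 : MvPowerSeries (Fin 2) R)) = 0 := by
    rw [constantCoeff_psEval]; exact hu0
  have hU1 : MvPowerSeries.constantCoeff
      (psEval u (MvPowerSeries.X 1 : MvPowerSeries (Fin 2) R)) = 0 := by
    rw [constantCoeff_psEval]; exact hu0
  constructor
  · rw [coeff_zero_psComp]; exact hu0
  · calc psEval (psComp u w) F
        = psEval u (psEval w F) := psEval_psComp hF0 (cc hw0) u
      _ = psEval u (mvEval2 F (psEval w (MvPowerSeries.X 0)) (psEval w (MvPowerSeries.X 1))) := by
          rw [hwE]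
      _ = mvEval2 (psEval u F) (psEval w (MvPowerSeries.X 0)) (psEval w (MvPowerSeries.X 1)) :=
          (mvEval2_psEval hW0 hW1 hF0 u).symm
      _ = mvEval2 (mvEval2 F (psEval u (MvPowerSeries.X 0)) (psEval u (MvPowerSeries.X 1)))
            (psEval w (MvPowerSeries.X 0)) (psEval w (MvPowerSeries.X 1)) := by rw [huE]
      _ = mvEval2 F
            (mvEval2 (psEval u (MvPowerSeries.X 0))
              (psEval w (MvPowerSeries.X 0)) (psEval w (MvPowerSeries.X 1)))
            (mvEval2 (psEval u (MvPowerSeries.X 1))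
              (psEval w (MvPowerSeries.X 0)) (psEval w (MvPowerSeries.X 1))) :=
          mvEval2_mvEval2 hW0 hW1 hU0 hU1 F
      _ = mvEval2 F
            (psEval u (mvEval2 (MvPowerSeries.X 0)
              (psEval w (MvPowerSeries.X 0)) (psEval w (MvPowerSeries.X 1))))
            (psEval u (mvEval2 (MvPowerSeries.X 1)
              (psEval w (MvPowerSeries.X 0)) (psEval w (MvPowerSeries.X 1)))) := by
          rw [mvEval2_psEval hW0 hW1 hX0 u, mvEval2_psEval hW0 hW1 hX1 u]
      _ = mvEval2 F (psEval u (psEval w (MvPowerSeries.X 0)))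
            (psEval u (psEval w (MvPowerSeries.X 1))) := by
          rw [mvEval2_X0 hW0 hW1, mvEval2_X1 hW0 hW1]
      _ = mvEval2 F (psEval (psComp u w) (MvPowerSeries.X 0))
            (psEval (psComp u w) (MvPowerSeries.X 1)) := by
          rw [psEval_psComp hX0 (cc hw0) u, psEval_psComp hX1 (cc hw0) u]

noncomputable def iterComp {R : Type*} [CommRing R] (g : PowerSeries R) : ℕ → PowerSeries R :=
  fun k => Nat.rec g (fun _ ih => psComp ih g) k

lemma iterComp_zero (g : PowerSeries R) : iterComp g 0 = g := rfl

lemma iterComp_succ (g : PowerSeries R) (k : ℕ) :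
    iterComp g (k + 1) = psComp (iterComp g k) g := rfl

lemma iterComp_coeff_zero {g : PowerSeries R} (hg0 : PowerSeries.coeff 0 g = 0) (k : ℕ) :
    PowerSeries.coeff 0 (iterComp g k) = 0 := by
  induction k with
  | zero => exact hg0
  | succ k ih => rw [iterComp_succ, coeff_zero_psComp]; exact ih

lemma iterComp_coeff_one (g : PowerSeries R) (k : ℕ) :
    PowerSeries.coeff 1 (iterComp g k) = (PowerSeries.coeff 1 g) ^ (k + 1) := by
  induction k with
  | zero => rw [iterComp_zero, pow_one]
  | succ k ih => rw [iterComp_succ, coeff_one_psComp, ih]; ring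

lemma iterComp_comm {g : PowerSeries R} (hg0 : PowerSeries.coeff 0 g = 0) (k : ℕ) :
    psComp (iterComp g k) g = psComp g (iterComp g k) := by
  induction k with
  | zero => rfl
  | succ k ih =>
    rw [iterComp_succ]
    calc psComp (psComp (iterComp g k) g) g
        = psComp (psComp g (iterComp g k)) g := by rw [ih]
      _ = psComp g (psComp (iterComp g k) g) :=
          psComp_assoc (cc (iterComp_coeff_zero hg0 k)) (cc hg0)

lemma isEndo_iterComp {F : MvPowerSeries (Fin 2) R}
    (hF0 : MvPowerSeries.constantCoeff F = 0)
    {g : PowerSeries R} (hg : IsEndo F g) (k : ℕ) : IsEndo F (iterComp g k) := by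
  induction k with
  | zero => exact hg
  | succ k ih => exact isEndo_comp hF0 ih hg

end Aux18

open Aux18

/-- Let `O` be the ring of integers of a finite extension `K/ℚ_p` of degree
`d`, with uniformizer `π`, ramification index `e` (`p ∼ π^e`) and normalized valuation
`v`.  Let `D ⊆ x·O[[x]]` be a full family of commuting power series: the multiplier map
`∂₀ : D → O`, `u ↦ u'(0)`, is surjective, and every noninvertible stable member has
height `e·log_p(wideg g)/v(g'(0)) = d`.  Assume the main theorem: every stable
noninvertible `g` of height `d` with `v(g'(0)) = 1` and `∂₀(Stab(g)) = O^*` is an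
endomorphism of a Lubin–Tate formal group `F` over `O` with `Stab(g) = Aut_O(F)`.
Then `D = End_O(F)` for some Lubin–Tate formal group law `F` over `O`. -/
theorem stmt_18 (p : ℕ) [hp : Fact p.Prime] (O : Type*) [CommRing O] [IsDomain O]
    [IsDiscreteValuationRing O] [Algebra ℤ_[p] O] [Module.Finite ℤ_[p] O]
    [IsAdicComplete (maximalIdeal O) O]
    (π : O) (hπ : Irreducible π)
    (e d : ℕ) (he : 1 ≤ e) (hpe : Associated ((p : O)) (π ^ e))
    (hd : Module.finrank ℤ_[p] O = d)
    (v : O → ℕ)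
    (hv : ∀ a : O, a ≠ 0 → a ∈ maximalIdeal O ^ v a ∧ a ∉ maximalIdeal O ^ (v a + 1))
    (D : Set (PowerSeries O))
    (hD0 : ∀ g ∈ D, PowerSeries.coeff 0 g = 0)
    (hDcomm : ∀ g ∈ D, ∀ h ∈ D, psComp g h = psComp h g)
    (hDsurj : ∀ a : O, ∃ g ∈ D, PowerSeries.coeff 1 g = a)
    (hDheight : ∀ g ∈ D, ¬ IsUnit (PowerSeries.coeff 1 g) →
      PowerSeries.coeff 1 g ≠ 0 →
      (e : ℝ) * Real.logb p (wideg g) = (d : ℝ) * v (PowerSeries.coeff 1 g))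
    (hmain : ∀ g : PowerSeries O,
      PowerSeries.coeff 0 g = 0 →
      PowerSeries.coeff 1 g ≠ 0 →
      (∀ n : ℕ, 1 ≤ n → (PowerSeries.coeff 1 g) ^ n ≠ 1) →
      ¬ IsUnit (PowerSeries.coeff 1 g) →
      v (PowerSeries.coeff 1 g) = 1 →
      (e : ℝ) * Real.logb p (wideg g) = (d : ℝ) * v (PowerSeries.coeff 1 g) →
      (∀ a : Oˣ, ∃ u : PowerSeries O, PowerSeries.coeff 0 u = 0 ∧
        PowerSeries.coeff 1 u = (a : O) ∧ psComp u g = psComp g u) →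
      ∃ F : MvPowerSeries (Fin 2) O, IsLubinTateFGL F ∧ IsEndo F g ∧
        (∀ u : PowerSeries O,
          (PowerSeries.coeff 0 u = 0 ∧ IsUnit (PowerSeries.coeff 1 u) ∧
            psComp u g = psComp g u) ↔
          (IsEndo F u ∧ IsUnit (PowerSeries.coeff 1 u)))) :
    ∃ F : MvPowerSeries (Fin 2) O, IsLubinTateFGL F ∧ D = {f : PowerSeries O | IsEndo F f} := by
    classical
  have hπ0 : π ≠ 0 := hπ.ne_zero
  have hπu : ¬IsUnit π := hπ.not_isUnit
  have hvπ : v π = 1 := by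
    obtain ⟨hmem, hnot⟩ := hv π hπ0
    have hm : maximalIdeal O = Ideal.span {π} :=
      (IsDiscreteValuationRing.irreducible_iff_uniformizer π).mp hπ
    have hπm : π ∈ maximalIdeal O := by
      rw [hm]; exact Ideal.mem_span_singleton_self π
    rcases Nat.lt_or_ge (v π) 1 with h | h
    · exfalso
      have h0 : v π = 0 := by omega
      rw [h0, zero_add, pow_one] at hnot
      exact hnot hπm
    · rcases Nat.lt_or_ge (v π) 2 with h2 | h2
      · omega
      · exfalso
        have hin : π ∈ maximalIdeal O ^ 2 :=
          Ideal.pow_le_pow_right h2 hmem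
        rw [hm, Ideal.span_singleton_pow, Ideal.mem_span_singleton] at hin
        obtain ⟨c, hc⟩ := hin
        have heq : π * 1 = π * (π * c) := by
          rw [mul_one]
          calc π = π ^ 2 * c := hc
            _ = π * (π * c) := by ring
        have h1 : (1 : O) = π * c := mul_left_cancel₀ hπ0 heq
        exact hπu (IsUnit.of_mul_eq_one c h1.symm)
  obtain ⟨g, hgD, hg1⟩ := hDsurj π
  have hg0 := hD0 g hgD
  have hgne : PowerSeries.coeff 1 g ≠ 0 := by rw [hg1]; exact hπ0
  have hgnu : ¬IsUnit (PowerSeries.coeff 1 g) := by rw [hg1]; exact hπu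
  have hgpow : ∀ n : ℕ, 1 ≤ n → (PowerSeries.coeff 1 g) ^ n ≠ 1 := by
    intro n hn h
    apply hπu
    rw [hg1] at h
    rcases n with _ | m
    · omega
    · exact IsUnit.of_mul_eq_one (π ^ m) (by rw [← pow_succ']; exact h)
  have hgv : v (PowerSeries.coeff 1 g) = 1 := by rw [hg1]; exact hvπ
  have hgh := hDheight g hgD hgnu hgne
  have hgstab : ∀ a : Oˣ, ∃ u : PowerSeries O, PowerSeries.coeff 0 u = 0 ∧
      PowerSeries.coeff 1 u = (a : O) ∧ psComp u g = psComp g u := by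
    intro a
    obtain ⟨u, huD, hu1⟩ := hDsurj a
    exact ⟨u, hD0 u huD, hu1, hDcomm u huD g hgD⟩
  obtain ⟨F, hFLT, hgF, hchar⟩ := hmain g hg0 hgne hgpow hgnu hgv hgh hgstab
  have hF0 : MvPowerSeries.constantCoeff F = 0 := by
    have h2 := congrArg (MvPowerSeries.constantCoeff) hFLT.1.1
    rw [constantCoeff_mvEval2, MvPowerSeries.coeff_zero_eq_constantCoeff] at h2
    rw [h2]
    exact PowerSeries.constantCoeff_X
  have hEC : ∀ h : PowerSeries O, IsEndo F h → psComp h g = psComp g h := by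
    intro h hh
    by_cases hau : IsUnit (PowerSeries.coeff 1 h)
    · exact ((hchar h).mpr ⟨hh, hau⟩).2.2
    by_cases ha0 : PowerSeries.coeff 1 h = 0
    · have hz : IsEndo F (0 : PowerSeries O) := isEndo_zero hF0
      have hu := (hFLT.2 0).unique ⟨hh, ha0⟩ ⟨hz, by simp⟩
      rw [hu, psComp_zero_left, psComp_zero_right hg0]
    · obtain ⟨k, un, hfact⟩ := IsDiscreteValuationRing.eq_unit_mul_pow_irreducible ha0 hπ
      have hk1 : 1 ≤ k := by
        by_contra hk
        have hk0 : k = 0 := by omega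
        rw [hk0, pow_zero, mul_one] at hfact
        exact hau (hfact ▸ un.isUnit)
      obtain ⟨w, hwD, hw1⟩ := hDsurj un
      have hw0 := hD0 w hwD
      have hwg := hDcomm w hwD g hgD
      have hwE : IsEndo F w := ((hchar w).mp ⟨hw0, by rw [hw1]; exact un.isUnit, hwg⟩).1
      have hIg0 : PowerSeries.coeff 0 (iterComp g (k - 1)) = 0 := iterComp_coeff_zero hg0 _
      have hcE : IsEndo F (psComp w (iterComp g (k - 1))) :=
        isEndo_comp hF0 hwE (isEndo_iterComp hF0 hgF (k - 1))
      have hc1 : PowerSeries.coeff 1 (psComp w (iterComp g (k - 1)))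
          = PowerSeries.coeff 1 h := by
        rw [coeff_one_psComp, iterComp_coeff_one, hg1, hw1, hfact]
        have hkk : k - 1 + 1 = k := by omega
        rw [hkk]
      have hcg : psComp (psComp w (iterComp g (k - 1))) g
          = psComp g (psComp w (iterComp g (k - 1))) := by
        calc psComp (psComp w (iterComp g (k - 1))) g
            = psComp w (psComp (iterComp g (k - 1)) g) := psComp_assoc (cc hIg0) (cc hg0)
          _ = psComp w (psComp g (iterComp g (k - 1))) := by rw [iterComp_comm hg0]
          _ = psComp (psComp w g) (iterComp g (k - 1)) := (psComp_assoc (cc hg0) (cc hIg0)).symm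
          _ = psComp (psComp g w) (iterComp g (k - 1)) := by rw [hwg]
          _ = psComp g (psComp w (iterComp g (k - 1))) := psComp_assoc (cc hw0) (cc hIg0)
      have hhc : h = psComp w (iterComp g (k - 1)) :=
        (hFLT.2 (PowerSeries.coeff 1 h)).unique ⟨hh, rfl⟩ ⟨hcE, hc1⟩
      rw [hhc]
      exact hcg
  have rig : ∀ f f' : PowerSeries O, PowerSeries.coeff 0 f = 0 →
      PowerSeries.coeff 0 f' = 0 →
      psComp f g = psComp g f → psComp f' g = psComp g f' →
      PowerSeries.coeff 1 f = PowerSeries.coeff 1 f' → f = f' :=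
    fun f f' h0 h0' hcm hcm' h1 => rigidity hπ0 hπu hg0 hg1 h0 h0' hcm hcm' h1
  refine ⟨F, hFLT, ?_⟩
  ext f
  simp only [Set.mem_setOf_eq]
  constructor
  · intro hfD
    obtain ⟨h, ⟨hhE, hh1⟩, _⟩ := hFLT.2 (PowerSeries.coeff 1 f)
    have hfh : f = h := rig f h (hD0 f hfD) hhE.1 (hDcomm f hfD g hgD) (hEC h hhE) hh1.symm
    rw [hfh]; exact hhE
  · intro hfE
    obtain ⟨w, hwD, hw1⟩ := hDsurj (PowerSeries.coeff 1 f)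
    have hfw : f = w := rig f w hfE.1 (hD0 w hwD) (hEC f hfE) (hDcomm w hwD g hgD) hw1.symm
    rw [hfw]; exact hwD
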